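/- (One-step expected contraction of proximal block coordinate descent, eq. (cdprooffinal).) For any w ∈ ℝ^{K(K−1)/2} with w ≥ 0, the average of the objective over all possible single block updates satisfies (1/|B|)·Σ_{b∈B} h(T_b(w)) − h(w*) ≤ ( 1 − 2κσ/(K(K−1)·L_max) )·( h(w) − h(w*) ). -/

import Mathlib

open scoped RealInnerProductSpace BigOperators

/-- Coordinates are indexed by unordered pairs of distinct elements of `[K]`,
represented as ordered pairs `(i,j)` with `i < j`; there are `K(K−1)/2` of them. -/
abbrev PairIdx (K : ℕ) := {q : Fin K × Fin K // q.1 < q.2}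

/-- Weight vectors live in `ℝ^{K(K−1)/2}` with the Euclidean structure. -/
abbrev GVec (K : ℕ) := EuclideanSpace ℝ (PairIdx K)

/-- A block `b = (k, 𝒦)` with `k ∈ [K]`, `𝒦 ⊆ [K]\{k}`, `|𝒦| = κ`. -/
abbrev Blk (K κ : ℕ) := {b : Fin K × Finset (Fin K) // b.1 ∉ b.2 ∧ b.2.card = κ}

/-- The coordinate `{i,j}` belongs to block `(k,𝒦)` iff it is of the form `{k,l}`, `l ∈ 𝒦`. -/
def inBlock {K κ : ℕ} (b : Blk K κ) (q : PairIdx K) : Prop :=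
  (q.1.1 = b.1.1 ∧ q.1.2 ∈ b.1.2) ∨ (q.1.2 = b.1.1 ∧ q.1.1 ∈ b.1.2)

instance {K κ : ℕ} (b : Blk K κ) (q : PairIdx K) : Decidable (inBlock b q) := by
  unfold inBlock; infer_instance

/-- The block proximal-gradient update `T_b(w)`: on the coordinates of block `b` it equals
`max(0, [w]_b − (1/L_b)[∇h(w)]_b)`, and it agrees with `w` outside block `b`. -/
noncomputable def blockProxUpdate {K κ : ℕ} (h : GVec K → ℝ) (L : Blk K κ → ℝ)
    (b : Blk K κ) (w : GVec K) : GVec K :=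
  WithLp.toLp 2 fun q => if inBlock b q then max 0 (w q - (1 / L b) * gradient h w q) else w q

/-! The step `T_b` minimises, over feasible block moves `z` (those with `w + z ≥ 0`), the separable
upper model `⟪z, ∇h w⟫ + L_b/2 ‖z‖²` of `h (w + z)`, so it does at least as well as the block part
of the feasible move `u = t (w* - w)`, `t = σ / L_max`; here `t ≤ 1` because strong convexity and
block smoothness along a single coordinate force `σ ≤ L_b`. Every coordinate lies in
`2 C(K-2, κ-1)` of the `K C(K-1, κ)` blocks, so averaging the block models gives `2κ / (K(K-1))`
times the full model at `u`, which strong convexity bounds by `t (h w* - h w)`. -/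

open Finset

theorem max_zero_sub_mul_add_sq_le {x g L z : ℝ} (hL : 0 < L) (hz : -x ≤ z) :
    (max 0 (x - 1 / L * g) - x) * g + L / 2 * (max 0 (x - 1 / L * g) - x) ^ 2
      ≤ z * g + L / 2 * z ^ 2 := by
  rcases le_total (x - 1 / L * g) 0 with hneg | hpos
  · have hLx : L * x ≤ g := by
      have := mul_le_mul_of_nonneg_left (by linarith : x ≤ 1 / L * g) hL.le
      rwa [← mul_assoc, mul_one_div_cancel hL.ne', one_mul] at this
    rw [max_eq_left hneg]
    nlinarith [mul_nonneg (by linarith : 0 ≤ z + x)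
      (by nlinarith : 0 ≤ g - L * x + L / 2 * (z + x))]
  · rw [max_eq_right hpos]
    have key : z * g + L / 2 * z ^ 2 - ((x - 1 / L * g - x) * g + L / 2 * (x - 1 / L * g - x) ^ 2)
        = L / 2 * (z + g / L) ^ 2 := by
      field_simp; ring
    nlinarith [key, sq_nonneg (z + g / L)]

theorem EuclideanSpace.real_inner_eq_sum {ι : Type*} [Fintype ι] (x y : EuclideanSpace ℝ ι) :
    ⟪x, y⟫ = ∑ i, x i * y i := by
  simp [PiLp.inner_apply, mul_comm]

theorem sum_sum_filter_eq_mul_sum {α β : Type*} [Fintype α] [Fintype β] (r : α → β → Prop)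
    [∀ a b, Decidable (r a b)] {c : ℕ} (hc : ∀ y, #{x | r x y} = c) (f : β → ℝ) :
    ∑ x, ∑ y with r x y, f y = c * ∑ y, f y := by
  simp only [sum_filter]
  rw [sum_comm, mul_sum]
  refine sum_congr rfl fun y _ => ?_
  rw [← sum_filter, sum_const, hc, nsmul_eq_mul]

theorem inner_smul_add_sq_le_of_lower_quadratic {E : Type*} [NormedAddCommGroup E]
    [InnerProductSpace ℝ E] {f : E → ℝ} {w z g : E} {σ M t : ℝ} (ht : 0 ≤ t) (htM : t * M = σ)
    (hsc : f w + ⟪z - w, g⟫ + σ / 2 * ‖z - w‖ ^ 2 ≤ f z) :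
    ⟪t • (z - w), g⟫ + M / 2 * ‖t • (z - w)‖ ^ 2 ≤ t * (f z - f w) := by
  rw [real_inner_smul_left, norm_smul, Real.norm_of_nonneg ht]
  have : M / 2 * (t * ‖z - w‖) ^ 2 = t * (σ / 2 * ‖z - w‖ ^ 2) := by rw [← htM]; ring
  rw [this, ← mul_add]
  exact mul_le_mul_of_nonneg_left (by linarith) ht

theorem le_of_lower_upper_quadratic {E : Type*} [NormedAddCommGroup E]
    [InnerProductSpace ℝ E] {f : E → ℝ} {w e g : E} {σ L : ℝ} (he : e ≠ 0)
    (hlow : f w + ⟪e, g⟫ + σ / 2 * ‖e‖ ^ 2 ≤ f (w + e))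
    (hup : f (w + e) ≤ f w + ⟪e, g⟫ + L / 2 * ‖e‖ ^ 2) : σ ≤ L := by
  have : 0 < ‖e‖ ^ 2 := by positivity
  nlinarith

section Blocks

variable {K κ : ℕ}

theorem card_filter_center_eq (a : Fin K) (P : Finset (Fin K) → Prop) [DecidablePred P] :
    #{b : Blk K κ | b.1.1 = a ∧ P b.1.2} = #{s ∈ (univ.erase a).powersetCard κ | P s} := by
  calc #{b : Blk K κ | b.1.1 = a ∧ P b.1.2}
      = #(({a} : Finset (Fin K)) ×ˢ {s ∈ (univ.erase a).powersetCard κ | P s}) := by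
        rw [← card_map (Function.Embedding.subtype _)]
        congr 1
        ext ⟨k, s⟩
        simp [subset_erase]
        aesop
    _ = _ := by rw [card_product, card_singleton, one_mul]

theorem card_blk : Fintype.card (Blk K κ) = K * (K - 1).choose κ := by
  rw [← card_univ, card_eq_sum_card_fiberwise (f := fun b : Blk K κ => b.1.1) (t := univ)
    (fun _ _ => mem_univ _)]
  have hfiber (a : Fin K) : #{b : Blk K κ | b.1.1 = a} = (K - 1).choose κ := by
    simpa [card_powersetCard] using card_filter_center_eq (κ := κ) a (fun _ => True)
  simp [hfiber]

theorem card_filter_center_mem (hκ : 1 ≤ κ) {a c : Fin K} (hac : a ≠ c) :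
    #{b : Blk K κ | b.1.1 = a ∧ c ∈ b.1.2} = (K - 2).choose (κ - 1) := by
  have hc : {c} ⊆ univ.erase a := by simpa using hac.symm
  have := card_filter_powersetCard_subset _ _ κ hc (by simpa using hκ)
  simp only [singleton_subset_iff, card_singleton, card_erase_of_mem (mem_univ a), card_univ,
    Fintype.card_fin] at this
  rw [card_filter_center_eq a (c ∈ ·), this, Nat.sub_sub]

theorem card_filter_inBlock (hκ : 1 ≤ κ) (q : PairIdx K) :
    #{b : Blk K κ | inBlock b q} = 2 * (K - 2).choose (κ - 1) := by
  have hne : q.1.1 ≠ q.1.2 := q.2.ne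
  calc #{b : Blk K κ | inBlock b q}
      = #{b : Blk K κ | b.1.1 = q.1.1 ∧ q.1.2 ∈ b.1.2}
        + #{b : Blk K κ | b.1.1 = q.1.2 ∧ q.1.1 ∈ b.1.2} := by
        rw [← card_union_of_disjoint]
        · simp only [inBlock, filter_or, eq_comm]
        · rw [disjoint_filter]
          rintro b - ⟨h1, -⟩ ⟨h2, -⟩
          exact hne (h1.symm.trans h2)
    _ = _ := by rw [card_filter_center_mem hκ hne, card_filter_center_mem hκ hne.symm, two_mul]

theorem exists_inBlock (hκ : 1 ≤ κ) (hκK : κ ≤ K - 1) :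
    ∃ (b : Blk K κ) (q : PairIdx K), inBlock b q := by
  let q : PairIdx K := ⟨(⟨0, by omega⟩, ⟨1, by omega⟩), by simp [Fin.lt_def]⟩
  have : 0 < #{b : Blk K κ | inBlock b q} := by
    rw [card_filter_inBlock hκ]
    have := Nat.choose_pos (by omega : κ - 1 ≤ K - 2)
    positivity
  obtain ⟨b, hb⟩ := card_pos.1 this
  exact ⟨b, q, (mem_filter.1 hb).2⟩

theorem two_mul_choose_div_card_blk (hκ : 1 ≤ κ) (hκK : κ ≤ K - 1) :
    (2 * (K - 2).choose (κ - 1) : ℝ) / Fintype.card (Blk K κ) = 2 * κ / (K * (K - 1)) := by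
  have hchoose : (K - 1) * (K - 2).choose (κ - 1) = (K - 1).choose κ * κ := by
    obtain ⟨n, rfl⟩ : ∃ n, K = n + 2 := ⟨K - 2, by omega⟩
    obtain ⟨k, rfl⟩ : ∃ k, κ = k + 1 := ⟨κ - 1, by omega⟩
    exact Nat.add_one_mul_choose_eq n k
  have hpos : 0 < (K - 1).choose κ := Nat.choose_pos hκK
  have hK : (1 : ℝ) < K := by exact_mod_cast (by omega : 1 < K)
  have hK1 : ((K - 1 : ℕ) : ℝ) = K - 1 := by
    rw [Nat.cast_sub (by omega : 1 ≤ K), Nat.cast_one]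
  have hB : (0 : ℝ) < K * (K - 1).choose κ := by
    have : (0 : ℝ) < K := by linarith
    positivity
  rw [card_blk, Nat.cast_mul, div_eq_div_iff hB.ne' (by nlinarith), ← hK1]
  have := congrArg (Nat.cast : ℕ → ℝ) hchoose
  push_cast at this ⊢
  linear_combination (2 * K : ℝ) * this

theorem strongConvexity_le_smoothness_of_inBlock {h : GVec K → ℝ} {σ : ℝ}
    (hsc : ∀ w z : GVec K, h w + ⟪z - w, gradient h w⟫ + σ / 2 * ‖z - w‖ ^ 2 ≤ h z)
    {L : Blk K κ → ℝ} {b : Blk K κ}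
    (hsmooth : ∀ w z : GVec K, (∀ q, ¬ inBlock b q → z q = 0) →
      h (w + z) ≤ h w + ⟪z, gradient h w⟫ + L b / 2 * ‖z‖ ^ 2)
    {q : PairIdx K} (hq : inBlock b q) : σ ≤ L b := by
  let e : GVec K := EuclideanSpace.single q 1
  have he : ∀ p, ¬ inBlock b p → e p = 0 := fun p hp => by
    simp [e, show p ≠ q from fun hpq => hp (hpq ▸ hq)]
  refine le_of_lower_upper_quadratic (w := 0) (e := e) (by simp [e]) ?_ (hsmooth 0 e he)
  simpa using hsc 0 e

theorem blockProxUpdate_le {h : GVec K → ℝ} {L : Blk K κ → ℝ} {b : Blk K κ} (hL : 0 < L b)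
    (hsmooth : ∀ w z : GVec K, (∀ q, ¬ inBlock b q → z q = 0) →
      h (w + z) ≤ h w + ⟪z, gradient h w⟫ + L b / 2 * ‖z‖ ^ 2)
    {w u : GVec K} (hu : ∀ q, -w q ≤ u q) :
    h (blockProxUpdate h L b w)
      ≤ h w + ∑ q with inBlock b q, (u q * gradient h w q + L b / 2 * u q ^ 2) := by
  set g := gradient h w
  set d := blockProxUpdate h L b w - w
  have hd (q : PairIdx K) :
      d q = if inBlock b q then max 0 (w q - 1 / L b * g q) - w q else 0 := by
    simp only [d, blockProxUpdate, PiLp.sub_apply]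
    split_ifs <;> simp [g]
  calc h (blockProxUpdate h L b w) = h (w + d) := by rw [add_sub_cancel]
    _ ≤ h w + ⟪d, g⟫ + L b / 2 * ‖d‖ ^ 2 := hsmooth w d fun q hq => by simp [hd, hq]
    _ = h w + ∑ q with inBlock b q, (d q * g q + L b / 2 * d q ^ 2) := by
        rw [EuclideanSpace.real_inner_eq_sum, EuclideanSpace.real_norm_sq_eq, mul_sum, add_assoc,
          ← sum_add_distrib, sum_filter]
        congr 1
        refine sum_congr rfl fun q _ => ?_
        split_ifs with hq <;> simp [hd, hq]
    _ ≤ _ := by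
        refine add_le_add le_rfl (sum_le_sum fun q hq => ?_)
        rw [hd, if_pos (mem_filter.1 hq).2]
        exact max_zero_sub_mul_add_sq_le hL (hu q)

theorem sum_blockProxUpdate_le (hκ : 1 ≤ κ) {h : GVec K → ℝ} {L : Blk K κ → ℝ}
    (hLpos : ∀ b, 0 < L b)
    (hsmooth : ∀ (b : Blk K κ) (w z : GVec K), (∀ q, ¬ inBlock b q → z q = 0) →
      h (w + z) ≤ h w + ⟪z, gradient h w⟫ + L b / 2 * ‖z‖ ^ 2)
    {Lmax : ℝ} (hLmax : ∀ b, L b ≤ Lmax) {w u : GVec K} (hu : ∀ q, -w q ≤ u q) :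
    ∑ b, h (blockProxUpdate h L b w) ≤ Fintype.card (Blk K κ) * h w
      + 2 * (K - 2).choose (κ - 1) * (⟪u, gradient h w⟫ + Lmax / 2 * ‖u‖ ^ 2) := by
  set g := gradient h w
  calc ∑ b, h (blockProxUpdate h L b w)
      ≤ ∑ b : Blk K κ, (h w + ∑ q with inBlock b q, (u q * g q + Lmax / 2 * u q ^ 2)) := by
        gcongr with b
        refine (blockProxUpdate_le (hLpos b) (hsmooth b) hu).trans ?_
        gcongr
        exact hLmax b
    _ = _ := by
        rw [sum_add_distrib, sum_const, card_univ, nsmul_eq_mul,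
          sum_sum_filter_eq_mul_sum _ (card_filter_inBlock hκ), EuclideanSpace.real_inner_eq_sum,
          EuclideanSpace.real_norm_sq_eq, sum_add_distrib, ← mul_sum]
        push_cast
        ring

end Blocks

theorem block_coordinate_descent_one_step_contraction_general
    (K κ : ℕ) (hκ1 : 1 ≤ κ) (hκ2 : κ ≤ K - 1)
    (h : GVec K → ℝ)
    (σ : ℝ) (hσ : 0 < σ)
    (hsc : ∀ w z : GVec K, h w + ⟪z - w, gradient h w⟫ + σ / 2 * ‖z - w‖ ^ 2 ≤ h z)
    (L : Blk K κ → ℝ) (hLpos : ∀ b, 0 < L b)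
    (hsmooth : ∀ (b : Blk K κ) (w z : GVec K), (∀ q, ¬ inBlock b q → z q = 0) →
      h (w + z) ≤ h w + ⟪z, gradient h w⟫ + L b / 2 * ‖z‖ ^ 2)
    (Lmax : ℝ) (hLmax : ∀ b, L b ≤ Lmax)
    (wstar : GVec K) (hwstar_nonneg : ∀ q, 0 ≤ wstar q)
    (w : GVec K) (hw_nonneg : ∀ q, 0 ≤ w q) :
    (Fintype.card (Blk K κ) : ℝ)⁻¹ * (∑ b : Blk K κ, h (blockProxUpdate h L b w)) - h wstar
      ≤ (1 - 2 * κ * σ / (K * ((K : ℝ) - 1) * Lmax)) * (h w - h wstar) := by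
  obtain ⟨b, q, hbq⟩ := exists_inBlock hκ1 hκ2
  have hσL : σ ≤ Lmax :=
    (strongConvexity_le_smoothness_of_inBlock hsc (hsmooth b) hbq).trans (hLmax b)
  have hLmax_pos : 0 < Lmax := hσ.trans_le hσL
  set t := σ / Lmax
  have ht0 : 0 ≤ t := by positivity
  have ht1 : t ≤ 1 := div_le_one_of_le₀ hσL hLmax_pos.le
  have hu (q : PairIdx K) : -w q ≤ (t • (wstar - w)) q := by
    simp only [PiLp.smul_apply, PiLp.sub_apply, smul_eq_mul]
    nlinarith [hw_nonneg q, hwstar_nonneg q]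
  have hsum := sum_blockProxUpdate_le hκ1 hLpos hsmooth hLmax hu
  have htL : t * Lmax = σ := div_mul_cancel₀ σ hLmax_pos.ne'
  have hmodel := inner_smul_add_sq_le_of_lower_quadratic ht0 htL (hsc w wstar)
  have hrate : 2 * κ * σ / (K * ((K : ℝ) - 1) * Lmax)
      = 2 * (K - 2).choose (κ - 1) / Fintype.card (Blk K κ) * t := by
    rw [two_mul_choose_div_card_blk hκ1 hκ2, ← htL]
    field_simp
  have hB : (0 : ℝ) < Fintype.card (Blk K κ) := by exact_mod_cast Fintype.card_pos_iff.2 ⟨b⟩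
  have hbound : ∑ b, h (blockProxUpdate h L b w) ≤ Fintype.card (Blk K κ) * h w
      + 2 * (K - 2).choose (κ - 1) * (t * (h wstar - h w)) := hsum.trans (by gcongr)
  rw [hrate]
  field_simp
  linarith

/-- One-step expected contraction of proximal block coordinate descent
(eq. (cdprooffinal)): for any `w ≥ 0`,
`(1/|B|) Σ_{b∈B} h(T_b(w)) − h(w*) ≤ (1 − 2κσ/(K(K−1)L_max)) (h(w) − h(w*))`. -/
theorem block_coordinate_descent_one_step_contraction
    (K κ : ℕ) (hK : 2 ≤ K) (hκ1 : 1 ≤ κ) (hκ2 : κ ≤ K - 1)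
    (h : GVec K → ℝ) (hdiff : Differentiable ℝ h)
    (σ : ℝ) (hσ : 0 < σ)
    (hsc : ∀ w z : GVec K, h w + ⟪z - w, gradient h w⟫ + σ / 2 * ‖z - w‖ ^ 2 ≤ h z)
    (L : Blk K κ → ℝ) (hLpos : ∀ b, 0 < L b)
    (hsmooth : ∀ (b : Blk K κ) (w z : GVec K), (∀ q, ¬ inBlock b q → z q = 0) →
      h (w + z) ≤ h w + ⟪z, gradient h w⟫ + L b / 2 * ‖z‖ ^ 2)
    (Lmax : ℝ) (hLmax : ∀ b, L b ≤ Lmax)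
    (wstar : GVec K) (hwstar_nonneg : ∀ q, 0 ≤ wstar q)
    (hwstar_min : ∀ z : GVec K, (∀ q, 0 ≤ z q) → h wstar ≤ h z)
    (w : GVec K) (hw_nonneg : ∀ q, 0 ≤ w q) :
    (Fintype.card (Blk K κ) : ℝ)⁻¹ * (∑ b : Blk K κ, h (blockProxUpdate h L b w)) - h wstar
      ≤ (1 - 2 * κ * σ / (K * ((K : ℝ) - 1) * Lmax)) * (h w - h wstar) :=
  block_coordinate_descent_one_step_contraction_general K κ hκ1 hκ2 h σ hσ hsc L hLpos hsmooth Lmax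
    hLmax wstar hwstar_nonneg w hw_nonneg
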